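/- Let L be a linearly ordered MV-algebra and let p, q ∈ L with 0 < p < q < 1. Then ]q, 1] ⊸ ]p, 1] = [q → p, 1], where ]x, 1] = {z ∈ L | x < z} and [x, 1] = {z ∈ L | x ≤ z}. -/

import Mathlib

/-- An MV-algebra: a commutative monoid `(L, ⊕, 0)` with a unary `¬` satisfying
`¬¬x = x`, `x ⊕ ¬0 = ¬0` and `¬(¬x ⊕ y) ⊕ y = ¬(¬y ⊕ x) ⊕ x`. -/
class MV (L : Type*) where
  add : L → L → L
  zero : L
  neg : L → L
  add_assoc : ∀ x y z : L, add (add x y) z = add x (add y z)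
  add_comm : ∀ x y : L, add x y = add y x
  add_zero : ∀ x : L, add x zero = x
  neg_neg : ∀ x : L, neg (neg x) = x
  add_neg_zero : ∀ x : L, add x (neg zero) = neg zero
  luk : ∀ x y : L, add (neg (add (neg x) y)) y = add (neg (add (neg y) x)) x

namespace MV

variable {L : Type*} [MV L]

/-- `1 = ¬0`. -/
def one : L := neg zero

/-- `x → y = ¬x ⊕ y`. -/
def imp (x y : L) : L := add (neg x) y

/-- `x ⊗ y = ¬(¬x ⊕ ¬y)`. -/
def otimes (x y : L) : L := neg (add (neg x) (neg y))

/-- `x ∨ y = (x → y) → y`. -/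
def join (x y : L) : L := imp (imp x y) y

/-- `x ∧ y = ¬(¬x ∨ ¬y)`. -/
def meet (x y : L) : L := neg (join (neg x) (neg y))

/-- `x ≤ y` iff `x → y = 1`. -/
def le (x y : L) : Prop := imp x y = one

/-- `x < y` iff `x ≤ y` and `x ≠ y`. -/
def lt (x y : L) : Prop := le x y ∧ x ≠ y

/-- A lattice filter: nonempty, upward closed, closed under `∧`. -/
def IsLatticeFilter (F : Set L) : Prop :=
  F.Nonempty ∧ (∀ x y : L, x ∈ F → le x y → y ∈ F) ∧
    (∀ x y : L, x ∈ F → y ∈ F → meet x y ∈ F)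

/-- A prime lattice filter: a proper lattice filter such that
`x ∨ y ∈ F` implies `x ∈ F` or `y ∈ F`. -/
def IsPrimeFilter (F : Set L) : Prop :=
  IsLatticeFilter F ∧ F ≠ Set.univ ∧ ∀ x y : L, join x y ∈ F → x ∈ F ∨ y ∈ F

/-- `F ⊸ G = {z | ∀ a ∉ G, z → a ∉ F}` (intended for `F ⊆ G`). -/
def lolli (F G : Set L) : Set L := {z | ∀ a ∉ G, imp z a ∉ F}

/-- The general `F ⊸ G = (F ∩ G) ⊸ G`. -/
def lolli' (F G : Set L) : Set L := lolli (F ∩ G) G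

/-- The kernel `K(F) = {z | ∀ a ∉ F, z → a ∉ F}`. -/
def ker (F : Set L) : Set L := {z | ∀ a ∉ F, imp z a ∉ F}

/-- `F⁺ = {z | ¬z ∉ F}`. -/
def plus (F : Set L) : Set L := {z | neg z ∉ F}

/-- An implication filter: contains `1` and is closed under modus ponens. -/
def IsImplicationFilter (P : Set L) : Prop :=
  (one : L) ∈ P ∧ ∀ x y : L, x ∈ P → imp x y ∈ P → y ∈ P

/-- `x ~_P y` iff `x → y ∈ P` and `y → x ∈ P`. -/
def simP (P : Set L) (x y : L) : Prop := imp x y ∈ P ∧ imp y x ∈ P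

/-- `J_u(F, P) = {z | ∃ f ∈ F, z ~_P f}`. -/
def Ju (F P : Set L) : Set L := {z | ∃ f ∈ F, simP P z f}

/-- `J_d(F, P) = (J_u(F⁺, P))⁺`. -/
def Jd (F P : Set L) : Set L := plus (Ju (plus F) P)

end MV

open MV

/-!
On `[p, 1]` the map `x ↦ x → p` is an order-reversing involution, so for `p ≤ z` we have
`z → p ≤ q ↔ q → p ≤ z`. In a chain, `a ∉ ]p, 1]` means `a ≤ p`, and `z → a` is largest at
`a = p`; hence `z ∈ ]q, 1] ⊸ ]p, 1]` exactly when `z → p ≤ q`, which forces `p ≤ z` since `q < 1`.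
-/

namespace MV

variable {L : Type*} [MV L]

theorem zero_add (x : L) : add zero x = x := by
  rw [add_comm]; exact add_zero x

theorem add_one (x : L) : add x one = one := add_neg_zero x

theorem neg_one : neg (one : L) = zero := neg_neg zero

theorem one_imp (x : L) : imp one x = x := by
  rw [imp, one, neg_neg, zero_add]

theorem neg_add_self (x : L) : add (neg x) x = one := by
  simpa only [add_one, neg_one, zero_add] using (luk x one).symm

theorem le_refl (x : L) : le x x := neg_add_self x

theorem lt_irrefl (x : L) : ¬ lt x x := fun h => h.2 rfl

theorem imp_imp_comm (x y : L) : imp (imp x y) y = imp (imp y x) x := luk x y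

theorem eq_one_of_one_le {x : L} (h : le one x) : x = one := by
  rwa [le, one_imp] at h

theorem le_antisymm {x y : L} (hxy : le x y) (hyx : le y x) : x = y := by
  have h := imp_imp_comm x y
  rw [le] at hxy hyx
  rw [hxy, hyx, one_imp, one_imp] at h
  exact h.symm

theorem le_add_right (x a : L) : le x (add x a) := by
  rw [le, imp, ← add_assoc, neg_add_self, add_comm, add_one]

theorem exists_add_of_le {x y : L} (h : le x y) : ∃ a, y = add x a := by
  have hl := imp_imp_comm x y
  rw [le] at h
  rw [h, one_imp] at hl
  exact ⟨_, hl.trans (add_comm _ _)⟩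

theorem le_trans {x y z : L} (hxy : le x y) (hyz : le y z) : le x z := by
  obtain ⟨a, rfl⟩ := exists_add_of_le hxy
  obtain ⟨b, rfl⟩ := exists_add_of_le hyz
  rw [add_assoc]
  exact le_add_right x (add a b)

theorem add_le_add_left {x y : L} (c : L) (h : le x y) : le (add c x) (add c y) := by
  obtain ⟨a, rfl⟩ := exists_add_of_le h
  rw [← add_assoc]
  exact le_add_right _ a

theorem neg_le_neg {x y : L} (h : le x y) : le (neg y) (neg x) := by
  rwa [le, imp, neg_neg, add_comm]

theorem imp_le_imp_left {x y : L} (c : L) (h : le x y) : le (imp c x) (imp c y) :=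
  add_le_add_left (neg c) h

theorem imp_le_imp_right {x y : L} (c : L) (h : le x y) : le (imp y c) (imp x c) := by
  rw [imp, imp, add_comm (neg y), add_comm (neg x)]
  exact add_le_add_left c (neg_le_neg h)

theorem imp_imp_self_of_le {x y : L} (h : le y x) : imp (imp x y) y = x := by
  rw [imp_imp_comm, show imp y x = one from h, one_imp]

theorem imp_le_of_imp_le {p q z : L} (hpz : le p z) (h : le (imp z p) q) :
    le (imp q p) z := by
  simpa only [imp_imp_self_of_le hpz] using imp_le_imp_right p h

theorem le_of_not_lt (hlin : ∀ x y : L, le x y ∨ le y x) {x y : L} (h : ¬ lt x y) :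
    le y x := by
  refine (hlin x y).elim (fun hxy => ?_) id
  by_cases heq : x = y
  · exact heq ▸ le_refl x
  · exact absurd ⟨hxy, heq⟩ h

end MV

theorem stmt_18_general {L : Type*} [MV L]
    (hlin : ∀ x y : L, le x y ∨ le y x)
    (p q : L) (hpq : lt p q) (hq1 : lt q (one : L)) :
    lolli {z : L | lt q z} {z : L | lt p z} = {z : L | le (imp q p) z} := by
  ext z
  simp only [lolli, Set.mem_ofPred_eq]
  constructor
  · intro hz
    have hzp : le (imp z p) q := le_of_not_lt hlin (hz p (lt_irrefl p))
    have hpz : le p z := by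
      refine (hlin z p).elim (fun hz_le_p => absurd ?_ hq1.2) id
      rw [le] at hz_le_p
      exact eq_one_of_one_le (hz_le_p ▸ hzp)
    exact imp_le_of_imp_le hpz hzp
  · intro hz a hap hqa
    have hzp : le (imp z p) q := imp_le_of_imp_le hpq.1 hz
    exact hqa.2 (le_antisymm hqa.1 (le_trans (imp_le_imp_left z (le_of_not_lt hlin hap)) hzp))

/-- In a linearly ordered MV-algebra with `0 < p < q < 1`,
`]q, 1] ⊸ ]p, 1] = [q → p, 1]`. -/
theorem stmt_18 {L : Type*} [MV L]
    (hlin : ∀ x y : L, le x y ∨ le y x)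
    (p q : L) (h0p : lt (zero : L) p) (hpq : lt p q) (hq1 : lt q (one : L)) :
    lolli {z : L | lt q z} {z : L | lt p z} = {z : L | le (imp q p) z} :=
  stmt_18_general hlin p q hpq hq1
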